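/- The translations T_0, T_1, …, T_8 pairwise commute as linear maps on Pic, and they satisfy the relation T_1² ∘ T_2⁴ ∘ T_3⁶ ∘ T_4⁵ ∘ T_5⁴ ∘ T_6³ ∘ T_7² ∘ T_0 ∘ T_8³ = id. -/
import Mathlib


open Finset Function

/-- The Picard lattice `ℤ^10` with basis `H_0, H_1, E_1, …, E_8`
(coordinates `0, 1, 2, …, 9`). -/
abbrev Pic : Type := Fin 10 → ℤ

/-- The intersection form: `(H_0|H_1) = 1`, `(H_0|H_0) = (H_1|H_1) = 0`,
`(H_0|E_i) = (H_1|E_i) = 0`, `(E_i|E_j) = -δ_{ij}`. -/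
def form (v w : Pic) : ℤ :=
  v 0 * w 1 + v 1 * w 0
    - v 2 * w 2 - v 3 * w 3 - v 4 * w 4 - v 5 * w 5
    - v 6 * w 6 - v 7 * w 7 - v 8 * w 8 - v 9 * w 9

/-- The anticanonical class `δ = 2H_0 + 2H_1 - (E_1 + ⋯ + E_8)`. -/
def delta : Pic := ![2, 2, -1, -1, -1, -1, -1, -1, -1, -1]

/-- The simple roots `β_0, …, β_8`:
`β_0 = E_7 - E_8`, `β_1 = H_1 - H_0`, `β_2 = H_0 - E_1 - E_2`,
`β_3 = E_2 - E_3`, `β_4 = E_3 - E_4`, `β_5 = E_4 - E_5`,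
`β_6 = E_5 - E_6`, `β_7 = E_6 - E_7`, `β_8 = E_1 - E_2`. -/
def β : Fin 9 → Pic :=
  ![![0, 0, 0, 0, 0, 0, 0, 0, 1, -1],
    ![-1, 1, 0, 0, 0, 0, 0, 0, 0, 0],
    ![1, 0, -1, -1, 0, 0, 0, 0, 0, 0],
    ![0, 0, 0, 1, -1, 0, 0, 0, 0, 0],
    ![0, 0, 0, 0, 1, -1, 0, 0, 0, 0],
    ![0, 0, 0, 0, 0, 1, -1, 0, 0, 0],
    ![0, 0, 0, 0, 0, 0, 1, -1, 0, 0],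
    ![0, 0, 0, 0, 0, 0, 0, 1, -1, 0],
    ![0, 0, 1, -1, 0, 0, 0, 0, 0, 0]]

/-- The reflection `w_i(v) = v + (v|β_i)·β_i`. -/
def w (i : Fin 9) : Pic → Pic := fun v => v + form v (β i) • β i

/-- `s_{134} = w_2 w_3 w_8 w_3 w_2`. -/
def s134 : Pic → Pic := w 2 ∘ w 3 ∘ w 8 ∘ w 3 ∘ w 2

/-- `s_{156} = w_4 w_3 w_2 w_5 w_4 w_3 w_8 w_3 w_4 w_5 w_2 w_3 w_4`. -/
def s156 : Pic → Pic :=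
  w 4 ∘ w 3 ∘ w 2 ∘ w 5 ∘ w 4 ∘ w 3 ∘ w 8 ∘ w 3 ∘ w 4 ∘ w 5 ∘ w 2 ∘ w 3 ∘ w 4

/-- `s_{789}`. -/
def s789 : Pic → Pic :=
  w 6 ∘ w 5 ∘ w 4 ∘ w 3 ∘ w 2 ∘ w 1 ∘ w 7 ∘ w 6 ∘ w 5 ∘ w 4 ∘ w 3 ∘ w 2 ∘
    w 0 ∘ w 7 ∘ w 6 ∘ w 5 ∘ w 4 ∘ w 3 ∘ w 8 ∘ w 3 ∘ w 4 ∘ w 5 ∘ w 6 ∘ w 7 ∘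
    w 0 ∘ w 2 ∘ w 3 ∘ w 4 ∘ w 5 ∘ w 6 ∘ w 7 ∘ w 1 ∘ w 2 ∘ w 3 ∘ w 4 ∘ w 5 ∘ w 6

/-- `T_1 = s_{134} s_{156} s_{789} s_{156} s_{134} w_1`. -/
noncomputable def T1 : Pic → Pic := s134 ∘ s156 ∘ s789 ∘ s156 ∘ s134 ∘ w 1

/-- `T_2 = w_2 T_1 w_2 T_1⁻¹`. -/
noncomputable def T2 : Pic → Pic := w 2 ∘ T1 ∘ w 2 ∘ invFun T1

/-- `T_3 = w_3 T_2 w_3 T_2⁻¹`. -/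
noncomputable def T3 : Pic → Pic := w 3 ∘ T2 ∘ w 3 ∘ invFun T2

/-- `T_4 = w_4 T_3 w_4 T_3⁻¹`. -/
noncomputable def T4 : Pic → Pic := w 4 ∘ T3 ∘ w 4 ∘ invFun T3

/-- `T_5 = w_5 T_4 w_5 T_4⁻¹`. -/
noncomputable def T5 : Pic → Pic := w 5 ∘ T4 ∘ w 5 ∘ invFun T4

/-- `T_6 = w_6 T_5 w_6 T_5⁻¹`. -/
noncomputable def T6 : Pic → Pic := w 6 ∘ T5 ∘ w 6 ∘ invFun T5

/-- `T_7 = w_7 T_6 w_7 T_6⁻¹`. -/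
noncomputable def T7 : Pic → Pic := w 7 ∘ T6 ∘ w 7 ∘ invFun T6

/-- `T_0 = w_0 T_7 w_0 T_7⁻¹`. -/
noncomputable def T0 : Pic → Pic := w 0 ∘ T7 ∘ w 0 ∘ invFun T7

/-- `T_8 = w_8 T_3 w_8 T_3⁻¹`. -/
noncomputable def T8 : Pic → Pic := w 8 ∘ T3 ∘ w 8 ∘ invFun T3

/-- The translations `T_0, …, T_8` indexed as a family. -/
noncomputable def T : Fin 9 → (Pic → Pic) := ![T0, T1, T2, T3, T4, T5, T6, T7, T8]

def Mt0 : Matrix (Fin 10) (Fin 10) ℤ :=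
  Matrix.of ![![5, 4, 2, 2, 2, 2, 2, 2, 0, 4],
    ![4, 5, 2, 2, 2, 2, 2, 2, 0, 4],
    ![-2, -2, 0, -1, -1, -1, -1, -1, 0, -2],
    ![-2, -2, -1, 0, -1, -1, -1, -1, 0, -2],
    ![-2, -2, -1, -1, 0, -1, -1, -1, 0, -2],
    ![-2, -2, -1, -1, -1, 0, -1, -1, 0, -2],
    ![-2, -2, -1, -1, -1, -1, 0, -1, 0, -2],
    ![-2, -2, -1, -1, -1, -1, -1, 0, 0, -2],
    ![-4, -4, -2, -2, -2, -2, -2, -2, 0, -3],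
    ![0, 0, 0, 0, 0, 0, 0, 0, 1, 0]]

def Mt1 : Matrix (Fin 10) (Fin 10) ℤ :=
  Matrix.of ![![9, 4, 3, 3, 3, 3, 3, 3, 3, 3],
    ![4, 1, 1, 1, 1, 1, 1, 1, 1, 1],
    ![-3, -1, 0, -1, -1, -1, -1, -1, -1, -1],
    ![-3, -1, -1, 0, -1, -1, -1, -1, -1, -1],
    ![-3, -1, -1, -1, 0, -1, -1, -1, -1, -1],
    ![-3, -1, -1, -1, -1, 0, -1, -1, -1, -1],
    ![-3, -1, -1, -1, -1, -1, 0, -1, -1, -1],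
    ![-3, -1, -1, -1, -1, -1, -1, 0, -1, -1],
    ![-3, -1, -1, -1, -1, -1, -1, -1, 0, -1],
    ![-3, -1, -1, -1, -1, -1, -1, -1, -1, 0]]

def Mt2 : Matrix (Fin 10) (Fin 10) ℤ :=
  Matrix.of ![![3, 4, 3, 3, 1, 1, 1, 1, 1, 1],
    ![4, 7, 4, 4, 2, 2, 2, 2, 2, 2],
    ![0, -1, 0, -1, 0, 0, 0, 0, 0, 0],
    ![0, -1, -1, 0, 0, 0, 0, 0, 0, 0],
    ![-2, -3, -2, -2, 0, -1, -1, -1, -1, -1],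
    ![-2, -3, -2, -2, -1, 0, -1, -1, -1, -1],
    ![-2, -3, -2, -2, -1, -1, 0, -1, -1, -1],
    ![-2, -3, -2, -2, -1, -1, -1, 0, -1, -1],
    ![-2, -3, -2, -2, -1, -1, -1, -1, 0, -1],
    ![-2, -3, -2, -2, -1, -1, -1, -1, -1, 0]]

def Mt3 : Matrix (Fin 10) (Fin 10) ℤ :=
  Matrix.of ![![5, 4, 2, 0, 4, 2, 2, 2, 2, 2],
    ![4, 5, 2, 0, 4, 2, 2, 2, 2, 2],
    ![-2, -2, 0, 0, -2, -1, -1, -1, -1, -1],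
    ![-4, -4, -2, 0, -3, -2, -2, -2, -2, -2],
    ![0, 0, 0, 1, 0, 0, 0, 0, 0, 0],
    ![-2, -2, -1, 0, -2, 0, -1, -1, -1, -1],
    ![-2, -2, -1, 0, -2, -1, 0, -1, -1, -1],
    ![-2, -2, -1, 0, -2, -1, -1, 0, -1, -1],
    ![-2, -2, -1, 0, -2, -1, -1, -1, 0, -1],
    ![-2, -2, -1, 0, -2, -1, -1, -1, -1, 0]]

def Mt4 : Matrix (Fin 10) (Fin 10) ℤ :=
  Matrix.of ![![5, 4, 2, 2, 0, 4, 2, 2, 2, 2],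
    ![4, 5, 2, 2, 0, 4, 2, 2, 2, 2],
    ![-2, -2, 0, -1, 0, -2, -1, -1, -1, -1],
    ![-2, -2, -1, 0, 0, -2, -1, -1, -1, -1],
    ![-4, -4, -2, -2, 0, -3, -2, -2, -2, -2],
    ![0, 0, 0, 0, 1, 0, 0, 0, 0, 0],
    ![-2, -2, -1, -1, 0, -2, 0, -1, -1, -1],
    ![-2, -2, -1, -1, 0, -2, -1, 0, -1, -1],
    ![-2, -2, -1, -1, 0, -2, -1, -1, 0, -1],
    ![-2, -2, -1, -1, 0, -2, -1, -1, -1, 0]]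

def Mt5 : Matrix (Fin 10) (Fin 10) ℤ :=
  Matrix.of ![![5, 4, 2, 2, 2, 0, 4, 2, 2, 2],
    ![4, 5, 2, 2, 2, 0, 4, 2, 2, 2],
    ![-2, -2, 0, -1, -1, 0, -2, -1, -1, -1],
    ![-2, -2, -1, 0, -1, 0, -2, -1, -1, -1],
    ![-2, -2, -1, -1, 0, 0, -2, -1, -1, -1],
    ![-4, -4, -2, -2, -2, 0, -3, -2, -2, -2],
    ![0, 0, 0, 0, 0, 1, 0, 0, 0, 0],
    ![-2, -2, -1, -1, -1, 0, -2, 0, -1, -1],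
    ![-2, -2, -1, -1, -1, 0, -2, -1, 0, -1],
    ![-2, -2, -1, -1, -1, 0, -2, -1, -1, 0]]

def Mt6 : Matrix (Fin 10) (Fin 10) ℤ :=
  Matrix.of ![![5, 4, 2, 2, 2, 2, 0, 4, 2, 2],
    ![4, 5, 2, 2, 2, 2, 0, 4, 2, 2],
    ![-2, -2, 0, -1, -1, -1, 0, -2, -1, -1],
    ![-2, -2, -1, 0, -1, -1, 0, -2, -1, -1],
    ![-2, -2, -1, -1, 0, -1, 0, -2, -1, -1],
    ![-2, -2, -1, -1, -1, 0, 0, -2, -1, -1],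
    ![-4, -4, -2, -2, -2, -2, 0, -3, -2, -2],
    ![0, 0, 0, 0, 0, 0, 1, 0, 0, 0],
    ![-2, -2, -1, -1, -1, -1, 0, -2, 0, -1],
    ![-2, -2, -1, -1, -1, -1, 0, -2, -1, 0]]

def Mt7 : Matrix (Fin 10) (Fin 10) ℤ :=
  Matrix.of ![![5, 4, 2, 2, 2, 2, 2, 0, 4, 2],
    ![4, 5, 2, 2, 2, 2, 2, 0, 4, 2],
    ![-2, -2, 0, -1, -1, -1, -1, 0, -2, -1],
    ![-2, -2, -1, 0, -1, -1, -1, 0, -2, -1],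
    ![-2, -2, -1, -1, 0, -1, -1, 0, -2, -1],
    ![-2, -2, -1, -1, -1, 0, -1, 0, -2, -1],
    ![-2, -2, -1, -1, -1, -1, 0, 0, -2, -1],
    ![-4, -4, -2, -2, -2, -2, -2, 0, -3, -2],
    ![0, 0, 0, 0, 0, 0, 0, 1, 0, 0],
    ![-2, -2, -1, -1, -1, -1, -1, 0, -2, 0]]

def Mt8 : Matrix (Fin 10) (Fin 10) ℤ :=
  Matrix.of ![![5, 4, 0, 4, 2, 2, 2, 2, 2, 2],
    ![4, 5, 0, 4, 2, 2, 2, 2, 2, 2],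
    ![-4, -4, 0, -3, -2, -2, -2, -2, -2, -2],
    ![0, 0, 1, 0, 0, 0, 0, 0, 0, 0],
    ![-2, -2, 0, -2, 0, -1, -1, -1, -1, -1],
    ![-2, -2, 0, -2, -1, 0, -1, -1, -1, -1],
    ![-2, -2, 0, -2, -1, -1, 0, -1, -1, -1],
    ![-2, -2, 0, -2, -1, -1, -1, 0, -1, -1],
    ![-2, -2, 0, -2, -1, -1, -1, -1, 0, -1],
    ![-2, -2, 0, -2, -1, -1, -1, -1, -1, 0]]

def Nt1 : Matrix (Fin 10) (Fin 10) ℤ :=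
  Matrix.of ![![1, 4, 1, 1, 1, 1, 1, 1, 1, 1],
    ![4, 9, 3, 3, 3, 3, 3, 3, 3, 3],
    ![-1, -3, 0, -1, -1, -1, -1, -1, -1, -1],
    ![-1, -3, -1, 0, -1, -1, -1, -1, -1, -1],
    ![-1, -3, -1, -1, 0, -1, -1, -1, -1, -1],
    ![-1, -3, -1, -1, -1, 0, -1, -1, -1, -1],
    ![-1, -3, -1, -1, -1, -1, 0, -1, -1, -1],
    ![-1, -3, -1, -1, -1, -1, -1, 0, -1, -1],
    ![-1, -3, -1, -1, -1, -1, -1, -1, 0, -1],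
    ![-1, -3, -1, -1, -1, -1, -1, -1, -1, 0]]

def Nt2 : Matrix (Fin 10) (Fin 10) ℤ :=
  Matrix.of ![![7, 4, 1, 1, 3, 3, 3, 3, 3, 3],
    ![4, 3, 0, 0, 2, 2, 2, 2, 2, 2],
    ![-4, -3, 0, -1, -2, -2, -2, -2, -2, -2],
    ![-4, -3, -1, 0, -2, -2, -2, -2, -2, -2],
    ![-2, -1, 0, 0, 0, -1, -1, -1, -1, -1],
    ![-2, -1, 0, 0, -1, 0, -1, -1, -1, -1],
    ![-2, -1, 0, 0, -1, -1, 0, -1, -1, -1],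
    ![-2, -1, 0, 0, -1, -1, -1, 0, -1, -1],
    ![-2, -1, 0, 0, -1, -1, -1, -1, 0, -1],
    ![-2, -1, 0, 0, -1, -1, -1, -1, -1, 0]]

def Nt3 : Matrix (Fin 10) (Fin 10) ℤ :=
  Matrix.of ![![5, 4, 2, 4, 0, 2, 2, 2, 2, 2],
    ![4, 5, 2, 4, 0, 2, 2, 2, 2, 2],
    ![-2, -2, 0, -2, 0, -1, -1, -1, -1, -1],
    ![0, 0, 0, 0, 1, 0, 0, 0, 0, 0],
    ![-4, -4, -2, -3, 0, -2, -2, -2, -2, -2],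
    ![-2, -2, -1, -2, 0, 0, -1, -1, -1, -1],
    ![-2, -2, -1, -2, 0, -1, 0, -1, -1, -1],
    ![-2, -2, -1, -2, 0, -1, -1, 0, -1, -1],
    ![-2, -2, -1, -2, 0, -1, -1, -1, 0, -1],
    ![-2, -2, -1, -2, 0, -1, -1, -1, -1, 0]]

def Nt4 : Matrix (Fin 10) (Fin 10) ℤ :=
  Matrix.of ![![5, 4, 2, 2, 4, 0, 2, 2, 2, 2],
    ![4, 5, 2, 2, 4, 0, 2, 2, 2, 2],
    ![-2, -2, 0, -1, -2, 0, -1, -1, -1, -1],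
    ![-2, -2, -1, 0, -2, 0, -1, -1, -1, -1],
    ![0, 0, 0, 0, 0, 1, 0, 0, 0, 0],
    ![-4, -4, -2, -2, -3, 0, -2, -2, -2, -2],
    ![-2, -2, -1, -1, -2, 0, 0, -1, -1, -1],
    ![-2, -2, -1, -1, -2, 0, -1, 0, -1, -1],
    ![-2, -2, -1, -1, -2, 0, -1, -1, 0, -1],
    ![-2, -2, -1, -1, -2, 0, -1, -1, -1, 0]]

def Nt5 : Matrix (Fin 10) (Fin 10) ℤ :=
  Matrix.of ![![5, 4, 2, 2, 2, 4, 0, 2, 2, 2],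
    ![4, 5, 2, 2, 2, 4, 0, 2, 2, 2],
    ![-2, -2, 0, -1, -1, -2, 0, -1, -1, -1],
    ![-2, -2, -1, 0, -1, -2, 0, -1, -1, -1],
    ![-2, -2, -1, -1, 0, -2, 0, -1, -1, -1],
    ![0, 0, 0, 0, 0, 0, 1, 0, 0, 0],
    ![-4, -4, -2, -2, -2, -3, 0, -2, -2, -2],
    ![-2, -2, -1, -1, -1, -2, 0, 0, -1, -1],
    ![-2, -2, -1, -1, -1, -2, 0, -1, 0, -1],
    ![-2, -2, -1, -1, -1, -2, 0, -1, -1, 0]]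

def Nt6 : Matrix (Fin 10) (Fin 10) ℤ :=
  Matrix.of ![![5, 4, 2, 2, 2, 2, 4, 0, 2, 2],
    ![4, 5, 2, 2, 2, 2, 4, 0, 2, 2],
    ![-2, -2, 0, -1, -1, -1, -2, 0, -1, -1],
    ![-2, -2, -1, 0, -1, -1, -2, 0, -1, -1],
    ![-2, -2, -1, -1, 0, -1, -2, 0, -1, -1],
    ![-2, -2, -1, -1, -1, 0, -2, 0, -1, -1],
    ![0, 0, 0, 0, 0, 0, 0, 1, 0, 0],
    ![-4, -4, -2, -2, -2, -2, -3, 0, -2, -2],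
    ![-2, -2, -1, -1, -1, -1, -2, 0, 0, -1],
    ![-2, -2, -1, -1, -1, -1, -2, 0, -1, 0]]

def Nt7 : Matrix (Fin 10) (Fin 10) ℤ :=
  Matrix.of ![![5, 4, 2, 2, 2, 2, 2, 4, 0, 2],
    ![4, 5, 2, 2, 2, 2, 2, 4, 0, 2],
    ![-2, -2, 0, -1, -1, -1, -1, -2, 0, -1],
    ![-2, -2, -1, 0, -1, -1, -1, -2, 0, -1],
    ![-2, -2, -1, -1, 0, -1, -1, -2, 0, -1],
    ![-2, -2, -1, -1, -1, 0, -1, -2, 0, -1],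
    ![-2, -2, -1, -1, -1, -1, 0, -2, 0, -1],
    ![0, 0, 0, 0, 0, 0, 0, 0, 1, 0],
    ![-4, -4, -2, -2, -2, -2, -2, -3, 0, -2],
    ![-2, -2, -1, -1, -1, -1, -1, -2, 0, 0]]

def Wm0 : Matrix (Fin 10) (Fin 10) ℤ :=
  Matrix.of ![![1, 0, 0, 0, 0, 0, 0, 0, 0, 0],
    ![0, 1, 0, 0, 0, 0, 0, 0, 0, 0],
    ![0, 0, 1, 0, 0, 0, 0, 0, 0, 0],
    ![0, 0, 0, 1, 0, 0, 0, 0, 0, 0],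
    ![0, 0, 0, 0, 1, 0, 0, 0, 0, 0],
    ![0, 0, 0, 0, 0, 1, 0, 0, 0, 0],
    ![0, 0, 0, 0, 0, 0, 1, 0, 0, 0],
    ![0, 0, 0, 0, 0, 0, 0, 1, 0, 0],
    ![0, 0, 0, 0, 0, 0, 0, 0, 0, 1],
    ![0, 0, 0, 0, 0, 0, 0, 0, 1, 0]]

def Wm1 : Matrix (Fin 10) (Fin 10) ℤ :=
  Matrix.of ![![0, 1, 0, 0, 0, 0, 0, 0, 0, 0],
    ![1, 0, 0, 0, 0, 0, 0, 0, 0, 0],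
    ![0, 0, 1, 0, 0, 0, 0, 0, 0, 0],
    ![0, 0, 0, 1, 0, 0, 0, 0, 0, 0],
    ![0, 0, 0, 0, 1, 0, 0, 0, 0, 0],
    ![0, 0, 0, 0, 0, 1, 0, 0, 0, 0],
    ![0, 0, 0, 0, 0, 0, 1, 0, 0, 0],
    ![0, 0, 0, 0, 0, 0, 0, 1, 0, 0],
    ![0, 0, 0, 0, 0, 0, 0, 0, 1, 0],
    ![0, 0, 0, 0, 0, 0, 0, 0, 0, 1]]

def Wm2 : Matrix (Fin 10) (Fin 10) ℤ :=
  Matrix.of ![![1, 1, 1, 1, 0, 0, 0, 0, 0, 0],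
    ![0, 1, 0, 0, 0, 0, 0, 0, 0, 0],
    ![0, -1, 0, -1, 0, 0, 0, 0, 0, 0],
    ![0, -1, -1, 0, 0, 0, 0, 0, 0, 0],
    ![0, 0, 0, 0, 1, 0, 0, 0, 0, 0],
    ![0, 0, 0, 0, 0, 1, 0, 0, 0, 0],
    ![0, 0, 0, 0, 0, 0, 1, 0, 0, 0],
    ![0, 0, 0, 0, 0, 0, 0, 1, 0, 0],
    ![0, 0, 0, 0, 0, 0, 0, 0, 1, 0],
    ![0, 0, 0, 0, 0, 0, 0, 0, 0, 1]]

def Wm3 : Matrix (Fin 10) (Fin 10) ℤ :=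
  Matrix.of ![![1, 0, 0, 0, 0, 0, 0, 0, 0, 0],
    ![0, 1, 0, 0, 0, 0, 0, 0, 0, 0],
    ![0, 0, 1, 0, 0, 0, 0, 0, 0, 0],
    ![0, 0, 0, 0, 1, 0, 0, 0, 0, 0],
    ![0, 0, 0, 1, 0, 0, 0, 0, 0, 0],
    ![0, 0, 0, 0, 0, 1, 0, 0, 0, 0],
    ![0, 0, 0, 0, 0, 0, 1, 0, 0, 0],
    ![0, 0, 0, 0, 0, 0, 0, 1, 0, 0],
    ![0, 0, 0, 0, 0, 0, 0, 0, 1, 0],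
    ![0, 0, 0, 0, 0, 0, 0, 0, 0, 1]]

def Wm4 : Matrix (Fin 10) (Fin 10) ℤ :=
  Matrix.of ![![1, 0, 0, 0, 0, 0, 0, 0, 0, 0],
    ![0, 1, 0, 0, 0, 0, 0, 0, 0, 0],
    ![0, 0, 1, 0, 0, 0, 0, 0, 0, 0],
    ![0, 0, 0, 1, 0, 0, 0, 0, 0, 0],
    ![0, 0, 0, 0, 0, 1, 0, 0, 0, 0],
    ![0, 0, 0, 0, 1, 0, 0, 0, 0, 0],
    ![0, 0, 0, 0, 0, 0, 1, 0, 0, 0],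
    ![0, 0, 0, 0, 0, 0, 0, 1, 0, 0],
    ![0, 0, 0, 0, 0, 0, 0, 0, 1, 0],
    ![0, 0, 0, 0, 0, 0, 0, 0, 0, 1]]

def Wm5 : Matrix (Fin 10) (Fin 10) ℤ :=
  Matrix.of ![![1, 0, 0, 0, 0, 0, 0, 0, 0, 0],
    ![0, 1, 0, 0, 0, 0, 0, 0, 0, 0],
    ![0, 0, 1, 0, 0, 0, 0, 0, 0, 0],
    ![0, 0, 0, 1, 0, 0, 0, 0, 0, 0],
    ![0, 0, 0, 0, 1, 0, 0, 0, 0, 0],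
    ![0, 0, 0, 0, 0, 0, 1, 0, 0, 0],
    ![0, 0, 0, 0, 0, 1, 0, 0, 0, 0],
    ![0, 0, 0, 0, 0, 0, 0, 1, 0, 0],
    ![0, 0, 0, 0, 0, 0, 0, 0, 1, 0],
    ![0, 0, 0, 0, 0, 0, 0, 0, 0, 1]]

def Wm6 : Matrix (Fin 10) (Fin 10) ℤ :=
  Matrix.of ![![1, 0, 0, 0, 0, 0, 0, 0, 0, 0],
    ![0, 1, 0, 0, 0, 0, 0, 0, 0, 0],
    ![0, 0, 1, 0, 0, 0, 0, 0, 0, 0],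
    ![0, 0, 0, 1, 0, 0, 0, 0, 0, 0],
    ![0, 0, 0, 0, 1, 0, 0, 0, 0, 0],
    ![0, 0, 0, 0, 0, 1, 0, 0, 0, 0],
    ![0, 0, 0, 0, 0, 0, 0, 1, 0, 0],
    ![0, 0, 0, 0, 0, 0, 1, 0, 0, 0],
    ![0, 0, 0, 0, 0, 0, 0, 0, 1, 0],
    ![0, 0, 0, 0, 0, 0, 0, 0, 0, 1]]

def Wm7 : Matrix (Fin 10) (Fin 10) ℤ :=
  Matrix.of ![![1, 0, 0, 0, 0, 0, 0, 0, 0, 0],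
    ![0, 1, 0, 0, 0, 0, 0, 0, 0, 0],
    ![0, 0, 1, 0, 0, 0, 0, 0, 0, 0],
    ![0, 0, 0, 1, 0, 0, 0, 0, 0, 0],
    ![0, 0, 0, 0, 1, 0, 0, 0, 0, 0],
    ![0, 0, 0, 0, 0, 1, 0, 0, 0, 0],
    ![0, 0, 0, 0, 0, 0, 1, 0, 0, 0],
    ![0, 0, 0, 0, 0, 0, 0, 0, 1, 0],
    ![0, 0, 0, 0, 0, 0, 0, 1, 0, 0],
    ![0, 0, 0, 0, 0, 0, 0, 0, 0, 1]]

def Wm8 : Matrix (Fin 10) (Fin 10) ℤ :=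
  Matrix.of ![![1, 0, 0, 0, 0, 0, 0, 0, 0, 0],
    ![0, 1, 0, 0, 0, 0, 0, 0, 0, 0],
    ![0, 0, 0, 1, 0, 0, 0, 0, 0, 0],
    ![0, 0, 1, 0, 0, 0, 0, 0, 0, 0],
    ![0, 0, 0, 0, 1, 0, 0, 0, 0, 0],
    ![0, 0, 0, 0, 0, 1, 0, 0, 0, 0],
    ![0, 0, 0, 0, 0, 0, 1, 0, 0, 0],
    ![0, 0, 0, 0, 0, 0, 0, 1, 0, 0],
    ![0, 0, 0, 0, 0, 0, 0, 0, 1, 0],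
    ![0, 0, 0, 0, 0, 0, 0, 0, 0, 1]]

def Ms134 : Matrix (Fin 10) (Fin 10) ℤ :=
  Matrix.of ![![1, 1, 0, 1, 1, 0, 0, 0, 0, 0],
    ![0, 1, 0, 0, 0, 0, 0, 0, 0, 0],
    ![0, 0, 1, 0, 0, 0, 0, 0, 0, 0],
    ![0, -1, 0, 0, -1, 0, 0, 0, 0, 0],
    ![0, -1, 0, -1, 0, 0, 0, 0, 0, 0],
    ![0, 0, 0, 0, 0, 1, 0, 0, 0, 0],
    ![0, 0, 0, 0, 0, 0, 1, 0, 0, 0],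
    ![0, 0, 0, 0, 0, 0, 0, 1, 0, 0],
    ![0, 0, 0, 0, 0, 0, 0, 0, 1, 0],
    ![0, 0, 0, 0, 0, 0, 0, 0, 0, 1]]

def Ms156 : Matrix (Fin 10) (Fin 10) ℤ :=
  Matrix.of ![![1, 1, 0, 0, 0, 1, 1, 0, 0, 0],
    ![0, 1, 0, 0, 0, 0, 0, 0, 0, 0],
    ![0, 0, 1, 0, 0, 0, 0, 0, 0, 0],
    ![0, 0, 0, 1, 0, 0, 0, 0, 0, 0],
    ![0, 0, 0, 0, 1, 0, 0, 0, 0, 0],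
    ![0, -1, 0, 0, 0, 0, -1, 0, 0, 0],
    ![0, -1, 0, 0, 0, -1, 0, 0, 0, 0],
    ![0, 0, 0, 0, 0, 0, 0, 1, 0, 0],
    ![0, 0, 0, 0, 0, 0, 0, 0, 1, 0],
    ![0, 0, 0, 0, 0, 0, 0, 0, 0, 1]]

def Ms789 : Matrix (Fin 10) (Fin 10) ℤ :=
  Matrix.of ![![2, 1, 1, 0, 0, 0, 0, 1, 1, 1],
    ![1, 2, 1, 0, 0, 0, 0, 1, 1, 1],
    ![-1, -1, 0, 0, 0, 0, 0, -1, -1, -1],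
    ![0, 0, 0, 1, 0, 0, 0, 0, 0, 0],
    ![0, 0, 0, 0, 1, 0, 0, 0, 0, 0],
    ![0, 0, 0, 0, 0, 1, 0, 0, 0, 0],
    ![0, 0, 0, 0, 0, 0, 1, 0, 0, 0],
    ![-1, -1, -1, 0, 0, 0, 0, 0, -1, -1],
    ![-1, -1, -1, 0, 0, 0, 0, -1, 0, -1],
    ![-1, -1, -1, 0, 0, 0, 0, -1, -1, 0]]

def Pw1 : Matrix (Fin 10) (Fin 10) ℤ :=
  Matrix.of ![![25, 16, 10, 10, 10, 10, 10, 10, 10, 10],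
    ![16, 9, 6, 6, 6, 6, 6, 6, 6, 6],
    ![-10, -6, -3, -4, -4, -4, -4, -4, -4, -4],
    ![-10, -6, -4, -3, -4, -4, -4, -4, -4, -4],
    ![-10, -6, -4, -4, -3, -4, -4, -4, -4, -4],
    ![-10, -6, -4, -4, -4, -3, -4, -4, -4, -4],
    ![-10, -6, -4, -4, -4, -4, -3, -4, -4, -4],
    ![-10, -6, -4, -4, -4, -4, -4, -3, -4, -4],
    ![-10, -6, -4, -4, -4, -4, -4, -4, -3, -4],
    ![-10, -6, -4, -4, -4, -4, -4, -4, -4, -3]]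

def Pw2 : Matrix (Fin 10) (Fin 10) ℤ :=
  Matrix.of ![![57, 64, 36, 36, 28, 28, 28, 28, 28, 28],
    ![64, 73, 40, 40, 32, 32, 32, 32, 32, 32],
    ![-24, -28, -15, -16, -12, -12, -12, -12, -12, -12],
    ![-24, -28, -16, -15, -12, -12, -12, -12, -12, -12],
    ![-32, -36, -20, -20, -15, -16, -16, -16, -16, -16],
    ![-32, -36, -20, -20, -16, -15, -16, -16, -16, -16],
    ![-32, -36, -20, -20, -16, -16, -15, -16, -16, -16],
    ![-32, -36, -20, -20, -16, -16, -16, -15, -16, -16],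
    ![-32, -36, -20, -20, -16, -16, -16, -16, -15, -16],
    ![-32, -36, -20, -20, -16, -16, -16, -16, -16, -15]]

def Pw3 : Matrix (Fin 10) (Fin 10) ℤ :=
  Matrix.of ![![145, 144, 72, 60, 84, 72, 72, 72, 72, 72],
    ![144, 145, 72, 60, 84, 72, 72, 72, 72, 72],
    ![-72, -72, -35, -30, -42, -36, -36, -36, -36, -36],
    ![-84, -84, -42, -35, -48, -42, -42, -42, -42, -42],
    ![-60, -60, -30, -24, -35, -30, -30, -30, -30, -30],
    ![-72, -72, -36, -30, -42, -35, -36, -36, -36, -36],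
    ![-72, -72, -36, -30, -42, -36, -35, -36, -36, -36],
    ![-72, -72, -36, -30, -42, -36, -36, -35, -36, -36],
    ![-72, -72, -36, -30, -42, -36, -36, -36, -35, -36],
    ![-72, -72, -36, -30, -42, -36, -36, -36, -36, -35]]

def Pw4 : Matrix (Fin 10) (Fin 10) ℤ :=
  Matrix.of ![![101, 100, 50, 50, 40, 60, 50, 50, 50, 50],
    ![100, 101, 50, 50, 40, 60, 50, 50, 50, 50],
    ![-50, -50, -24, -25, -20, -30, -25, -25, -25, -25],
    ![-50, -50, -25, -24, -20, -30, -25, -25, -25, -25],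
    ![-60, -60, -30, -30, -24, -35, -30, -30, -30, -30],
    ![-40, -40, -20, -20, -15, -24, -20, -20, -20, -20],
    ![-50, -50, -25, -25, -20, -30, -24, -25, -25, -25],
    ![-50, -50, -25, -25, -20, -30, -25, -24, -25, -25],
    ![-50, -50, -25, -25, -20, -30, -25, -25, -24, -25],
    ![-50, -50, -25, -25, -20, -30, -25, -25, -25, -24]]

def Pw5 : Matrix (Fin 10) (Fin 10) ℤ :=
  Matrix.of ![![65, 64, 32, 32, 32, 24, 40, 32, 32, 32],
    ![64, 65, 32, 32, 32, 24, 40, 32, 32, 32],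
    ![-32, -32, -15, -16, -16, -12, -20, -16, -16, -16],
    ![-32, -32, -16, -15, -16, -12, -20, -16, -16, -16],
    ![-32, -32, -16, -16, -15, -12, -20, -16, -16, -16],
    ![-40, -40, -20, -20, -20, -15, -24, -20, -20, -20],
    ![-24, -24, -12, -12, -12, -8, -15, -12, -12, -12],
    ![-32, -32, -16, -16, -16, -12, -20, -15, -16, -16],
    ![-32, -32, -16, -16, -16, -12, -20, -16, -15, -16],
    ![-32, -32, -16, -16, -16, -12, -20, -16, -16, -15]]

def Pw6 : Matrix (Fin 10) (Fin 10) ℤ :=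
  Matrix.of ![![37, 36, 18, 18, 18, 18, 12, 24, 18, 18],
    ![36, 37, 18, 18, 18, 18, 12, 24, 18, 18],
    ![-18, -18, -8, -9, -9, -9, -6, -12, -9, -9],
    ![-18, -18, -9, -8, -9, -9, -6, -12, -9, -9],
    ![-18, -18, -9, -9, -8, -9, -6, -12, -9, -9],
    ![-18, -18, -9, -9, -9, -8, -6, -12, -9, -9],
    ![-24, -24, -12, -12, -12, -12, -8, -15, -12, -12],
    ![-12, -12, -6, -6, -6, -6, -3, -8, -6, -6],
    ![-18, -18, -9, -9, -9, -9, -6, -12, -8, -9],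
    ![-18, -18, -9, -9, -9, -9, -6, -12, -9, -8]]

def Pw7 : Matrix (Fin 10) (Fin 10) ℤ :=
  Matrix.of ![![17, 16, 8, 8, 8, 8, 8, 4, 12, 8],
    ![16, 17, 8, 8, 8, 8, 8, 4, 12, 8],
    ![-8, -8, -3, -4, -4, -4, -4, -2, -6, -4],
    ![-8, -8, -4, -3, -4, -4, -4, -2, -6, -4],
    ![-8, -8, -4, -4, -3, -4, -4, -2, -6, -4],
    ![-8, -8, -4, -4, -4, -3, -4, -2, -6, -4],
    ![-8, -8, -4, -4, -4, -4, -3, -2, -6, -4],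
    ![-12, -12, -6, -6, -6, -6, -6, -3, -8, -6],
    ![-4, -4, -2, -2, -2, -2, -2, 0, -3, -2],
    ![-8, -8, -4, -4, -4, -4, -4, -2, -6, -3]]

def Pw8 : Matrix (Fin 10) (Fin 10) ℤ :=
  Matrix.of ![![37, 36, 12, 24, 18, 18, 18, 18, 18, 18],
    ![36, 37, 12, 24, 18, 18, 18, 18, 18, 18],
    ![-24, -24, -8, -15, -12, -12, -12, -12, -12, -12],
    ![-12, -12, -3, -8, -6, -6, -6, -6, -6, -6],
    ![-18, -18, -6, -12, -8, -9, -9, -9, -9, -9],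
    ![-18, -18, -6, -12, -9, -8, -9, -9, -9, -9],
    ![-18, -18, -6, -12, -9, -9, -8, -9, -9, -9],
    ![-18, -18, -6, -12, -9, -9, -9, -8, -9, -9],
    ![-18, -18, -6, -12, -9, -9, -9, -9, -8, -9],
    ![-18, -18, -6, -12, -9, -9, -9, -9, -9, -8]]


def L (M : Matrix (Fin 10) (Fin 10) ℤ) : Pic → Pic := fun v => M.mulVec v

def mul' (A B : Matrix (Fin 10) (Fin 10) ℤ) : Matrix (Fin 10) (Fin 10) ℤ :=
  fun i j => A i 0 * B 0 j + A i 1 * B 1 j + A i 2 * B 2 j + A i 3 * B 3 j +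
    A i 4 * B 4 j + A i 5 * B 5 j + A i 6 * B 6 j + A i 7 * B 7 j +
    A i 8 * B 8 j + A i 9 * B 9 j

lemma mul'_eq (A B : Matrix (Fin 10) (Fin 10) ℤ) : A * B = mul' A B := by
  ext i j
  show ∑ k : Fin 10, A i k * B k j = _
  rw [Fin.sum_univ_castSucc, Fin.sum_univ_castSucc, Fin.sum_univ_eight]
  rfl

lemma Lcomp (A B : Matrix (Fin 10) (Fin 10) ℤ) : L A ∘ L B = L (mul' A B) := by
  funext v
  simp [L, Matrix.mulVec_mulVec, mul'_eq]

lemma Lid : L 1 = id := by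
  funext v
  show (1 : Matrix (Fin 10) (Fin 10) ℤ).mulVec v = v
  rw [Matrix.one_mulVec]

lemma lc0 : ((0 : Fin 8).castSucc.castSucc : Fin 10) = 0 := rfl
lemma lc1 : ((1 : Fin 8).castSucc.castSucc : Fin 10) = 1 := rfl
lemma lc2 : ((2 : Fin 8).castSucc.castSucc : Fin 10) = 2 := rfl
lemma lc3 : ((3 : Fin 8).castSucc.castSucc : Fin 10) = 3 := rfl
lemma lc4 : ((4 : Fin 8).castSucc.castSucc : Fin 10) = 4 := rfl
lemma lc5 : ((5 : Fin 8).castSucc.castSucc : Fin 10) = 5 := rfl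
lemma lc6 : ((6 : Fin 8).castSucc.castSucc : Fin 10) = 6 := rfl
lemma lc7 : ((7 : Fin 8).castSucc.castSucc : Fin 10) = 7 := rfl
lemma lc8 : ((Fin.last 8).castSucc : Fin 10) = 8 := rfl
lemma lc9 : (Fin.last 9 : Fin 10) = 9 := rfl
lemma cv0 {α : Type*} (a0 a1 a2 a3 a4 a5 a6 a7 a8 a9 : α) :
    ![a0, a1, a2, a3, a4, a5, a6, a7, a8, a9] (0 : Fin 10) = a0 := rfl
lemma cv1 {α : Type*} (a0 a1 a2 a3 a4 a5 a6 a7 a8 a9 : α) :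
    ![a0, a1, a2, a3, a4, a5, a6, a7, a8, a9] (1 : Fin 10) = a1 := rfl
lemma cv2 {α : Type*} (a0 a1 a2 a3 a4 a5 a6 a7 a8 a9 : α) :
    ![a0, a1, a2, a3, a4, a5, a6, a7, a8, a9] (2 : Fin 10) = a2 := rfl
lemma cv3 {α : Type*} (a0 a1 a2 a3 a4 a5 a6 a7 a8 a9 : α) :
    ![a0, a1, a2, a3, a4, a5, a6, a7, a8, a9] (3 : Fin 10) = a3 := rfl
lemma cv4 {α : Type*} (a0 a1 a2 a3 a4 a5 a6 a7 a8 a9 : α) :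
    ![a0, a1, a2, a3, a4, a5, a6, a7, a8, a9] (4 : Fin 10) = a4 := rfl
lemma cv5 {α : Type*} (a0 a1 a2 a3 a4 a5 a6 a7 a8 a9 : α) :
    ![a0, a1, a2, a3, a4, a5, a6, a7, a8, a9] (5 : Fin 10) = a5 := rfl
lemma cv6 {α : Type*} (a0 a1 a2 a3 a4 a5 a6 a7 a8 a9 : α) :
    ![a0, a1, a2, a3, a4, a5, a6, a7, a8, a9] (6 : Fin 10) = a6 := rfl
lemma cv7 {α : Type*} (a0 a1 a2 a3 a4 a5 a6 a7 a8 a9 : α) :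
    ![a0, a1, a2, a3, a4, a5, a6, a7, a8, a9] (7 : Fin 10) = a7 := rfl
lemma cv8 {α : Type*} (a0 a1 a2 a3 a4 a5 a6 a7 a8 a9 : α) :
    ![a0, a1, a2, a3, a4, a5, a6, a7, a8, a9] (8 : Fin 10) = a8 := rfl
lemma cv9 {α : Type*} (a0 a1 a2 a3 a4 a5 a6 a7 a8 a9 : α) :
    ![a0, a1, a2, a3, a4, a5, a6, a7, a8, a9] (9 : Fin 10) = a9 := rfl
lemma cw0 {α : Type*} (a0 a1 a2 a3 a4 a5 a6 a7 a8 : α) :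
    ![a0, a1, a2, a3, a4, a5, a6, a7, a8] (0 : Fin 9) = a0 := rfl
lemma cw1 {α : Type*} (a0 a1 a2 a3 a4 a5 a6 a7 a8 : α) :
    ![a0, a1, a2, a3, a4, a5, a6, a7, a8] (1 : Fin 9) = a1 := rfl
lemma cw2 {α : Type*} (a0 a1 a2 a3 a4 a5 a6 a7 a8 : α) :
    ![a0, a1, a2, a3, a4, a5, a6, a7, a8] (2 : Fin 9) = a2 := rfl
lemma cw3 {α : Type*} (a0 a1 a2 a3 a4 a5 a6 a7 a8 : α) :
    ![a0, a1, a2, a3, a4, a5, a6, a7, a8] (3 : Fin 9) = a3 := rfl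
lemma cw4 {α : Type*} (a0 a1 a2 a3 a4 a5 a6 a7 a8 : α) :
    ![a0, a1, a2, a3, a4, a5, a6, a7, a8] (4 : Fin 9) = a4 := rfl
lemma cw5 {α : Type*} (a0 a1 a2 a3 a4 a5 a6 a7 a8 : α) :
    ![a0, a1, a2, a3, a4, a5, a6, a7, a8] (5 : Fin 9) = a5 := rfl
lemma cw6 {α : Type*} (a0 a1 a2 a3 a4 a5 a6 a7 a8 : α) :
    ![a0, a1, a2, a3, a4, a5, a6, a7, a8] (6 : Fin 9) = a6 := rfl
lemma cw7 {α : Type*} (a0 a1 a2 a3 a4 a5 a6 a7 a8 : α) :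
    ![a0, a1, a2, a3, a4, a5, a6, a7, a8] (7 : Fin 9) = a7 := rfl
lemma cw8 {α : Type*} (a0 a1 a2 a3 a4 a5 a6 a7 a8 : α) :
    ![a0, a1, a2, a3, a4, a5, a6, a7, a8] (8 : Fin 9) = a8 := rfl
lemma fm0 (h : (0 : ℕ) < 10) : (⟨0, h⟩ : Fin 10) = 0 := rfl
lemma fm1 (h : (1 : ℕ) < 10) : (⟨1, h⟩ : Fin 10) = 1 := rfl
lemma fm2 (h : (2 : ℕ) < 10) : (⟨2, h⟩ : Fin 10) = 2 := rfl
lemma fm3 (h : (3 : ℕ) < 10) : (⟨3, h⟩ : Fin 10) = 3 := rfl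
lemma fm4 (h : (4 : ℕ) < 10) : (⟨4, h⟩ : Fin 10) = 4 := rfl
lemma fm5 (h : (5 : ℕ) < 10) : (⟨5, h⟩ : Fin 10) = 5 := rfl
lemma fm6 (h : (6 : ℕ) < 10) : (⟨6, h⟩ : Fin 10) = 6 := rfl
lemma fm7 (h : (7 : ℕ) < 10) : (⟨7, h⟩ : Fin 10) = 7 := rfl
lemma fm8 (h : (8 : ℕ) < 10) : (⟨8, h⟩ : Fin 10) = 8 := rfl
lemma fm9 (h : (9 : ℕ) < 10) : (⟨9, h⟩ : Fin 10) = 9 := rfl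

set_option maxHeartbeats 1000000 in
lemma wL0 : w 0 = L Wm0 := by
  funext v k
  show v k + form v (β 0) * β 0 k = _
  rw [L, Matrix.mulVec, dotProduct, Fin.sum_univ_castSucc, Fin.sum_univ_castSucc,
    Fin.sum_univ_eight, form]
  simp only [lc0, lc1, lc2, lc3, lc4, lc5, lc6, lc7, lc8, lc9]
  fin_cases k <;>
    simp only [Wm0, fm0, fm1, fm2, fm3, fm4, fm5, fm6, fm7, fm8, fm9, β, Matrix.of_apply, cw0, cw1, cw2, cw3, cw4, cw5, cw6, cw7, cw8, cv0, cv1, cv2, cv3, cv4, cv5, cv6, cv7, cv8, cv9] <;> ring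

set_option maxHeartbeats 1000000 in
lemma wL1 : w 1 = L Wm1 := by
  funext v k
  show v k + form v (β 1) * β 1 k = _
  rw [L, Matrix.mulVec, dotProduct, Fin.sum_univ_castSucc, Fin.sum_univ_castSucc,
    Fin.sum_univ_eight, form]
  simp only [lc0, lc1, lc2, lc3, lc4, lc5, lc6, lc7, lc8, lc9]
  fin_cases k <;>
    simp only [Wm1, fm0, fm1, fm2, fm3, fm4, fm5, fm6, fm7, fm8, fm9, β, Matrix.of_apply, cw0, cw1, cw2, cw3, cw4, cw5, cw6, cw7, cw8, cv0, cv1, cv2, cv3, cv4, cv5, cv6, cv7, cv8, cv9] <;> ring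

set_option maxHeartbeats 1000000 in
lemma wL2 : w 2 = L Wm2 := by
  funext v k
  show v k + form v (β 2) * β 2 k = _
  rw [L, Matrix.mulVec, dotProduct, Fin.sum_univ_castSucc, Fin.sum_univ_castSucc,
    Fin.sum_univ_eight, form]
  simp only [lc0, lc1, lc2, lc3, lc4, lc5, lc6, lc7, lc8, lc9]
  fin_cases k <;>
    simp only [Wm2, fm0, fm1, fm2, fm3, fm4, fm5, fm6, fm7, fm8, fm9, β, Matrix.of_apply, cw0, cw1, cw2, cw3, cw4, cw5, cw6, cw7, cw8, cv0, cv1, cv2, cv3, cv4, cv5, cv6, cv7, cv8, cv9] <;> ring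

set_option maxHeartbeats 1000000 in
lemma wL3 : w 3 = L Wm3 := by
  funext v k
  show v k + form v (β 3) * β 3 k = _
  rw [L, Matrix.mulVec, dotProduct, Fin.sum_univ_castSucc, Fin.sum_univ_castSucc,
    Fin.sum_univ_eight, form]
  simp only [lc0, lc1, lc2, lc3, lc4, lc5, lc6, lc7, lc8, lc9]
  fin_cases k <;>
    simp only [Wm3, fm0, fm1, fm2, fm3, fm4, fm5, fm6, fm7, fm8, fm9, β, Matrix.of_apply, cw0, cw1, cw2, cw3, cw4, cw5, cw6, cw7, cw8, cv0, cv1, cv2, cv3, cv4, cv5, cv6, cv7, cv8, cv9] <;> ring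

set_option maxHeartbeats 1000000 in
lemma wL4 : w 4 = L Wm4 := by
  funext v k
  show v k + form v (β 4) * β 4 k = _
  rw [L, Matrix.mulVec, dotProduct, Fin.sum_univ_castSucc, Fin.sum_univ_castSucc,
    Fin.sum_univ_eight, form]
  simp only [lc0, lc1, lc2, lc3, lc4, lc5, lc6, lc7, lc8, lc9]
  fin_cases k <;>
    simp only [Wm4, fm0, fm1, fm2, fm3, fm4, fm5, fm6, fm7, fm8, fm9, β, Matrix.of_apply, cw0, cw1, cw2, cw3, cw4, cw5, cw6, cw7, cw8, cv0, cv1, cv2, cv3, cv4, cv5, cv6, cv7, cv8, cv9] <;> ring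

set_option maxHeartbeats 1000000 in
lemma wL5 : w 5 = L Wm5 := by
  funext v k
  show v k + form v (β 5) * β 5 k = _
  rw [L, Matrix.mulVec, dotProduct, Fin.sum_univ_castSucc, Fin.sum_univ_castSucc,
    Fin.sum_univ_eight, form]
  simp only [lc0, lc1, lc2, lc3, lc4, lc5, lc6, lc7, lc8, lc9]
  fin_cases k <;>
    simp only [Wm5, fm0, fm1, fm2, fm3, fm4, fm5, fm6, fm7, fm8, fm9, β, Matrix.of_apply, cw0, cw1, cw2, cw3, cw4, cw5, cw6, cw7, cw8, cv0, cv1, cv2, cv3, cv4, cv5, cv6, cv7, cv8, cv9] <;> ring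

set_option maxHeartbeats 1000000 in
lemma wL6 : w 6 = L Wm6 := by
  funext v k
  show v k + form v (β 6) * β 6 k = _
  rw [L, Matrix.mulVec, dotProduct, Fin.sum_univ_castSucc, Fin.sum_univ_castSucc,
    Fin.sum_univ_eight, form]
  simp only [lc0, lc1, lc2, lc3, lc4, lc5, lc6, lc7, lc8, lc9]
  fin_cases k <;>
    simp only [Wm6, fm0, fm1, fm2, fm3, fm4, fm5, fm6, fm7, fm8, fm9, β, Matrix.of_apply, cw0, cw1, cw2, cw3, cw4, cw5, cw6, cw7, cw8, cv0, cv1, cv2, cv3, cv4, cv5, cv6, cv7, cv8, cv9] <;> ring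

set_option maxHeartbeats 1000000 in
lemma wL7 : w 7 = L Wm7 := by
  funext v k
  show v k + form v (β 7) * β 7 k = _
  rw [L, Matrix.mulVec, dotProduct, Fin.sum_univ_castSucc, Fin.sum_univ_castSucc,
    Fin.sum_univ_eight, form]
  simp only [lc0, lc1, lc2, lc3, lc4, lc5, lc6, lc7, lc8, lc9]
  fin_cases k <;>
    simp only [Wm7, fm0, fm1, fm2, fm3, fm4, fm5, fm6, fm7, fm8, fm9, β, Matrix.of_apply, cw0, cw1, cw2, cw3, cw4, cw5, cw6, cw7, cw8, cv0, cv1, cv2, cv3, cv4, cv5, cv6, cv7, cv8, cv9] <;> ring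

set_option maxHeartbeats 1000000 in
lemma wL8 : w 8 = L Wm8 := by
  funext v k
  show v k + form v (β 8) * β 8 k = _
  rw [L, Matrix.mulVec, dotProduct, Fin.sum_univ_castSucc, Fin.sum_univ_castSucc,
    Fin.sum_univ_eight, form]
  simp only [lc0, lc1, lc2, lc3, lc4, lc5, lc6, lc7, lc8, lc9]
  fin_cases k <;>
    simp only [Wm8, fm0, fm1, fm2, fm3, fm4, fm5, fm6, fm7, fm8, fm9, β, Matrix.of_apply, cw0, cw1, cw2, cw3, cw4, cw5, cw6, cw7, cw8, cv0, cv1, cv2, cv3, cv4, cv5, cv6, cv7, cv8, cv9] <;> ring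


lemma Linv {M N : Matrix (Fin 10) (Fin 10) ℤ} (h1 : mul' M N = 1) (h2 : mul' N M = 1) :
    invFun (L M) = L N := by
  have e1 : L M ∘ L N = id := by rw [Lcomp, h1, Lid]
  have e2 : L N ∘ L M = id := by rw [Lcomp, h2, Lid]
  have hr : Function.RightInverse (L N) (L M) := fun x => congrFun e1 x
  have hl : Function.LeftInverse (L N) (L M) := fun x => congrFun e2 x
  exact Function.invFun_eq_of_injective_of_rightInverse hl.injective hr

set_option maxRecDepth 100000

lemma e134 : s134 = L Ms134 := by
  unfold s134
  simp only [wL0, wL1, wL2, wL3, wL4, wL5, wL6, wL7, wL8, Function.comp_assoc, Lcomp]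
  refine congrArg L ?_
  decide

lemma e156 : s156 = L Ms156 := by
  unfold s156
  simp only [wL0, wL1, wL2, wL3, wL4, wL5, wL6, wL7, wL8, Function.comp_assoc, Lcomp]
  refine congrArg L ?_
  decide

lemma e789 : s789 = L Ms789 := by
  unfold s789
  simp only [wL0, wL1, wL2, wL3, wL4, wL5, wL6, wL7, wL8, Function.comp_assoc, Lcomp]
  refine congrArg L ?_
  decide

lemma eT1 : T1 = L Mt1 := by
  unfold T1
  simp only [e134, e156, e789, wL1, Function.comp_assoc, Lcomp]
  refine congrArg L ?_
  decide

lemma iT1 : invFun T1 = L Nt1 := by rw [eT1]; exact Linv (by decide) (by decide)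

lemma eT2 : T2 = L Mt2 := by
  unfold T2
  rw [iT1, eT1]
  simp only [wL2, Function.comp_assoc, Lcomp]
  refine congrArg L ?_
  decide

lemma iT2 : invFun T2 = L Nt2 := by rw [eT2]; exact Linv (by decide) (by decide)

lemma eT3 : T3 = L Mt3 := by
  unfold T3
  rw [iT2, eT2]
  simp only [wL3, Function.comp_assoc, Lcomp]
  refine congrArg L ?_
  decide

lemma iT3 : invFun T3 = L Nt3 := by rw [eT3]; exact Linv (by decide) (by decide)

lemma eT4 : T4 = L Mt4 := by
  unfold T4
  rw [iT3, eT3]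
  simp only [wL4, Function.comp_assoc, Lcomp]
  refine congrArg L ?_
  decide

lemma iT4 : invFun T4 = L Nt4 := by rw [eT4]; exact Linv (by decide) (by decide)

lemma eT5 : T5 = L Mt5 := by
  unfold T5
  rw [iT4, eT4]
  simp only [wL5, Function.comp_assoc, Lcomp]
  refine congrArg L ?_
  decide

lemma iT5 : invFun T5 = L Nt5 := by rw [eT5]; exact Linv (by decide) (by decide)

lemma eT6 : T6 = L Mt6 := by
  unfold T6
  rw [iT5, eT5]
  simp only [wL6, Function.comp_assoc, Lcomp]
  refine congrArg L ?_
  decide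

lemma iT6 : invFun T6 = L Nt6 := by rw [eT6]; exact Linv (by decide) (by decide)

lemma eT7 : T7 = L Mt7 := by
  unfold T7
  rw [iT6, eT6]
  simp only [wL7, Function.comp_assoc, Lcomp]
  refine congrArg L ?_
  decide

lemma iT7 : invFun T7 = L Nt7 := by rw [eT7]; exact Linv (by decide) (by decide)

lemma eT0 : T0 = L Mt0 := by
  unfold T0
  rw [iT7, eT7]
  simp only [wL0, Function.comp_assoc, Lcomp]
  refine congrArg L ?_
  decide

lemma eT8 : T8 = L Mt8 := by
  unfold T8
  rw [iT3, eT3]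
  simp only [wL8, Function.comp_assoc, Lcomp]
  refine congrArg L ?_
  decide


def MT : Fin 9 → Matrix (Fin 10) (Fin 10) ℤ :=
  ![Mt0, Mt1, Mt2, Mt3, Mt4, Mt5, Mt6, Mt7, Mt8]

lemma eTfam (i : Fin 9) : T i = L (MT i) := by
  fin_cases i
  · exact eT0
  · exact eT1
  · exact eT2
  · exact eT3
  · exact eT4
  · exact eT5
  · exact eT6
  · exact eT7
  · exact eT8

set_option maxHeartbeats 4000000 in
lemma cm (i j : Fin 9) : mul' (MT i) (MT j) = mul' (MT j) (MT i) := by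
  fin_cases i <;> fin_cases j <;> decide

lemma it2 (f : Pic → Pic) : f^[2] = f ∘ f := by funext x; rfl
lemma it3 (f : Pic → Pic) : f^[3] = f ∘ f ∘ f := by funext x; rfl
lemma it4 (f : Pic → Pic) : f^[4] = f ∘ f ∘ f ∘ f := by funext x; rfl
lemma it5 (f : Pic → Pic) : f^[5] = f ∘ f ∘ f ∘ f ∘ f := by funext x; rfl
lemma it6 (f : Pic → Pic) : f^[6] = f ∘ f ∘ f ∘ f ∘ f ∘ f := by funext x; rfl

lemma p1 : (L Mt1)^[2] = L Pw1 := by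
  rw [it2, Lcomp]; refine congrArg L ?_; decide
lemma p2 : (L Mt2)^[4] = L Pw2 := by
  rw [it4]; simp only [Function.comp_assoc, Lcomp]; refine congrArg L ?_; decide
lemma p3 : (L Mt3)^[6] = L Pw3 := by
  rw [it6]; simp only [Function.comp_assoc, Lcomp]; refine congrArg L ?_; decide
lemma p4 : (L Mt4)^[5] = L Pw4 := by
  rw [it5]; simp only [Function.comp_assoc, Lcomp]; refine congrArg L ?_; decide
lemma p5 : (L Mt5)^[4] = L Pw5 := by
  rw [it4]; simp only [Function.comp_assoc, Lcomp]; refine congrArg L ?_; decide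
lemma p6 : (L Mt6)^[3] = L Pw6 := by
  rw [it3]; simp only [Function.comp_assoc, Lcomp]; refine congrArg L ?_; decide
lemma p7 : (L Mt7)^[2] = L Pw7 := by
  rw [it2, Lcomp]; refine congrArg L ?_; decide
lemma p8 : (L Mt8)^[3] = L Pw8 := by
  rw [it3]; simp only [Function.comp_assoc, Lcomp]; refine congrArg L ?_; decide

/-- The translations pairwise commute and satisfy
`T_1² T_2⁴ T_3⁶ T_4⁵ T_5⁴ T_6³ T_7² T_0 T_8³ = 1`. -/
theorem statement_16 :
    (∀ i j : Fin 9, T i ∘ T j = T j ∘ T i) ∧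
    (T1^[2] ∘ T2^[4] ∘ T3^[6] ∘ T4^[5] ∘ T5^[4] ∘ T6^[3] ∘ T7^[2] ∘ T0 ∘ T8^[3]
      = id) := by
  constructor
  · intro i j
    rw [eTfam i, eTfam j, Lcomp, Lcomp, cm i j]
  · rw [eT0, eT1, eT2, eT3, eT4, eT5, eT6, eT7, eT8, p1, p2, p3, p4, p5, p6, p7, p8]
    simp only [Function.comp_assoc, Lcomp]
    rw [show mul' Pw1 (mul' Pw2 (mul' Pw3 (mul' Pw4 (mul' Pw5 (mul' Pw6 (mul' Pw7 (mul' Mt0 Pw8))))))) = 1 by decide, Lid]
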